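/- Let X be a well-ordered alphabet, ρ an X-diagonal braiding on kX, and [−]_ρ the ρ-bracketing on the free algebra k⟨X⟩ (defined by [x]_ρ = x for letters, [u]_ρ = [[u_L]_ρ, [u_R]_ρ]_ρ for Lyndon u of length ≥ 2 with Shirshov factorization (u_L, u_R), and [u]_ρ = [u_L]_ρ[u_R]_ρ otherwise). Then for each word u, [u]_ρ ∈ u + span{ w : w a rearrangement of u with w ≺ u }. Consequently {[u]_ρ : u word on X} is a basis of k⟨X⟩. -/

import Mathlib

variable {X : Type*} [LinearOrder X] [WellFoundedLT X]

/-- The partial order `≺` on words: `u ≺ v` iff `u = r ++ x :: s`, `v = r ++ y :: t`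
with letters `x < y`. -/
def Prec (u v : List X) : Prop :=
  ∃ (r s t : List X) (x y : X), x < y ∧ u = r ++ x :: s ∧ v = r ++ y :: t

/-- The pseudo-lexicographic order: `u <_lex v` iff `v` is a proper prefix of `u` or `u ≺ v`. -/
def PLex (u v : List X) : Prop :=
  (v <+: u ∧ v ≠ u) ∨ Prec u v

/-- `u ≤_lex v`. -/
def PLexLe (u v : List X) : Prop := u = v ∨ PLex u v

/-- A Lyndon word (Kharchenko convention): a nonempty word strictly greater in the
pseudo-lexicographic order than each of its proper nonempty suffixes. -/
def IsLyndon (u : List X) : Prop :=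
  u ≠ [] ∧ ∀ v w : List X, u = v ++ w → v ≠ [] → w ≠ [] → PLex w u


/-- The Shirshov factorization of `u`: `u = uL ++ uR` where `uR` is the
pseudo-lexicographically largest proper (nonempty) suffix of `u`. -/
def IsShirshov (u uL uR : List X) : Prop :=
  u = uL ++ uR ∧ uL ≠ [] ∧ uR ≠ [] ∧
    ∀ w : List X, w <:+ u → w ≠ u → w ≠ [] → w = uR ∨ PLex w uR


/-- The multiplicative extension of the diagonal braiding scalars `ρ` to words. -/
def rhoW {k : Type*} [Field k] (ρ : X → X → k) (u v : List X) : k :=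
  (u.map fun x => (v.map (ρ x)).prod).prod

/-!
The bracketing is unitriangular with respect to the monomial basis of `k⟨X⟩`. By induction on
the length, `[u_L][u_R]` is `u_L u_R = u` plus rearrangements of `u` that are `≺ u`, and in the
Lyndon case the extra term `[u_R][u_L]` only involves words `s t` with `s = u_R` or `s ≺ u_R`,
which are `≺ u` because `u_R ≺ u` for a Lyndon word. A family that is unitriangular with respect to a basis is linearly
independent as soon as the order is refined by a linear order (here the pseudo-lexicographic
order), and spans as soon as the order is well founded (here because a word has only finitely
many rearrangements).
-/

open Submodule

section Unitriangular

variable {ι R M : Type*} [Ring R] [AddCommGroup M] [Module R M] (b : Module.Basis ι R M)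
  {f : ι → M} {lower : ι → Set ι}

theorem Module.Basis.repr_apply_of_sub_mem_span {i j : ι}
    (hf : f j - b j ∈ span R (b '' lower j)) (hij : i ∉ lower j) :
    b.repr (f j) i = Finsupp.single j 1 i := by
  have hzero : b.repr (f j - b j) i = 0 :=
    Finsupp.notMem_support_iff.mp fun hi => hij ((b.mem_span_image.mp hf) hi)
  rw [map_sub, Finsupp.sub_apply, b.repr_self, sub_eq_zero] at hzero
  exact hzero

theorem linearIndependent_of_unitriangular {β : Type*} [LinearOrder β] (φ : ι → β)
    (hφ : ∀ i j, i ∈ lower j → φ i < φ j) (hf : ∀ j, f j - b j ∈ span R (b '' lower j)) :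
    LinearIndependent R f := by
  classical
  rw [linearIndependent_iff']
  intro s g hsum i hi
  by_contra hgi
  obtain ⟨m, hm, hmax⟩ := (s.filter (g · ≠ 0)).exists_max_image φ ⟨i, by simp [hi, hgi]⟩
  rw [Finset.mem_filter] at hm
  have hcoeff : ∀ j ∈ s, g j * b.repr (f j) m = if j = m then g m else 0 := by
    intro j hj
    by_cases hgj : g j = 0
    · split_ifs <;> simp_all
    have hmj : m ∉ lower j := fun h =>
      (hφ m j h).not_ge (hmax j (Finset.mem_filter.mpr ⟨hj, hgj⟩))
    rw [b.repr_apply_of_sub_mem_span (hf j) hmj, Finsupp.single_apply]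
    split_ifs <;> simp_all
  have hm0 := congrArg (fun x => b.repr x m) hsum
  simp only [map_sum, map_smul, Finsupp.coe_finsetSum, Finset.sum_apply, Finsupp.smul_apply,
    smul_eq_mul, map_zero, Finsupp.coe_zero, Pi.zero_apply] at hm0
  rw [Finset.sum_congr rfl hcoeff, Finset.sum_ite_eq' s m, if_pos hm.1] at hm0
  exact hm.2 hm0

theorem span_eq_top_of_unitriangular (hwf : WellFounded fun i j => i ∈ lower j)
    (hf : ∀ j, f j - b j ∈ span R (b '' lower j)) :
    span R (Set.range f) = ⊤ := by
  have hb : ∀ j, b j ∈ span R (Set.range f) := fun j => hwf.induction j fun j ih => by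
    have hlow : f j - b j ∈ span R (Set.range f) :=
      span_le.mpr (by rintro _ ⟨i, hi, rfl⟩; exact ih i hi) (hf j)
    simpa using sub_mem (subset_span (Set.mem_range_self j)) hlow
  rw [eq_top_iff, ← b.span_eq, span_le]
  rintro _ ⟨j, rfl⟩
  exact hb j

end Unitriangular

section Words

variable {α : Type*}

/-- The sentinel `⊤` ranks a word above its proper extensions, which turns `PLex` into the
lexicographic order. -/
def plexKey (u : List α) : List (WithTop α) := u.map (↑) ++ [⊤]

theorem plexKey_injective : Function.Injective (plexKey (α := α)) := fun _ _ h =>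
  List.map_injective_iff.mpr WithTop.coe_injective (List.append_cancel_right h)

variable [LinearOrder α] {a b : α} {u v w : List α}

theorem not_prec_nil_left : ¬ Prec [] v := by
  rintro ⟨r, s, t, x, y, -, h, -⟩
  simp at h

theorem not_prec_nil_right : ¬ Prec u [] := by
  rintro ⟨r, s, t, x, y, -, -, h⟩
  simp at h

theorem prec_cons_cons_iff : Prec (a :: u) (b :: v) ↔ a < b ∨ a = b ∧ Prec u v := by
  constructor
  · rintro ⟨_ | ⟨c, r⟩, s, t, x, y, hxy, hu, hv⟩
    · simp_all
    · simp only [List.cons_append, List.cons.injEq] at hu hv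
      exact Or.inr ⟨hu.1.trans hv.1.symm, r, s, t, x, y, hxy, hu.2, hv.2⟩
  · rintro (hab | ⟨rfl, r, s, t, x, y, hxy, rfl, rfl⟩)
    · exact ⟨[], u, v, a, b, hab, rfl, rfl⟩
    · exact ⟨a :: r, s, t, x, y, hxy, rfl, rfl⟩

theorem prec_irrefl : ∀ u : List α, ¬ Prec u u
  | [] => not_prec_nil_left
  | a :: u => by
    rw [prec_cons_cons_iff]
    rintro (h | ⟨-, h⟩)
    exacts [lt_irrefl a h, prec_irrefl u h]

theorem Prec.trans : ∀ {u v w : List α}, Prec u v → Prec v w → Prec u w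
  | [], _, _, h, _ => absurd h not_prec_nil_left
  | _, [], _, h, _ => absurd h not_prec_nil_right
  | _, _, [], _, h => absurd h not_prec_nil_right
  | a :: u, b :: v, c :: w, huv, hvw => by
    rw [prec_cons_cons_iff] at huv hvw ⊢
    rcases huv with hab | ⟨rfl, huv⟩ <;> rcases hvw with hbc | ⟨rfl, hvw⟩
    exacts [Or.inl (hab.trans hbc), Or.inl hab, Or.inl hbc, Or.inr ⟨rfl, huv.trans hvw⟩]

theorem Prec.append (h : Prec u v) (s t : List α) : Prec (u ++ s) (v ++ t) := by
  obtain ⟨r, s', t', x, y, hxy, rfl, rfl⟩ := h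
  exact ⟨r, s' ++ s, t' ++ t, x, y, hxy, by simp, by simp⟩

theorem Prec.append_left (h : Prec u v) (r : List α) : Prec (r ++ u) (r ++ v) := by
  obtain ⟨r', s, t, x, y, hxy, rfl, rfl⟩ := h
  exact ⟨r ++ r', s, t, x, y, hxy, by simp, by simp⟩

theorem PLex.prec_of_length_le (h : PLex u v) (hl : u.length ≤ v.length) : Prec u v :=
  h.resolve_left fun ⟨hpre, hne⟩ => hne (hpre.eq_of_length (hpre.length_le.antisymm hl))

theorem plex_nil_right_iff : PLex u [] ↔ u ≠ [] := by
  simp [PLex, not_prec_nil_right, eq_comm]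

theorem not_plex_nil_left : ¬ PLex [] v := by
  rintro (⟨hpre, hne⟩ | h)
  exacts [hne (List.prefix_nil.mp hpre), not_prec_nil_left h]

theorem plex_cons_cons_iff : PLex (a :: u) (b :: v) ↔ a < b ∨ a = b ∧ PLex u v := by
  simp only [PLex, List.cons_prefix_cons, ne_eq, List.cons.injEq, prec_cons_cons_iff]
  constructor
  · rintro (⟨⟨rfl, h⟩, hne⟩ | h | ⟨rfl, h⟩)
    exacts [Or.inr ⟨rfl, Or.inl ⟨h, by simpa using hne⟩⟩, Or.inl h, Or.inr ⟨rfl, Or.inr h⟩]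
  · rintro (h | ⟨rfl, ⟨h, hne⟩ | h⟩)
    exacts [Or.inr (Or.inl h), Or.inl ⟨⟨rfl, h⟩, by simpa using hne⟩, Or.inr (Or.inr ⟨rfl, h⟩)]

theorem plexKey_lt_plexKey_iff : ∀ {u v : List α}, plexKey u < plexKey v ↔ PLex u v
  | [], [] => by simp [plexKey, not_plex_nil_left]
  | [], b :: v => by simp [plexKey, List.cons_lt_cons_iff, not_plex_nil_left]
  | a :: u, [] => by simp [plexKey, List.cons_lt_cons_iff, plex_nil_right_iff]
  | a :: u, b :: v => by
    rw [plex_cons_cons_iff, ← plexKey_lt_plexKey_iff]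
    simp [plexKey, List.cons_lt_cons_iff]

theorem exists_isShirshov (hu : 2 ≤ u.length) : ∃ uL uR, IsShirshov u uL uR := by
  set S := (u.tails.toFinset.erase []).erase u
  have hS : ∀ w, w ∈ S ↔ w <:+ u ∧ w ≠ u ∧ w ≠ [] := by
    simp only [S, Finset.mem_erase, List.mem_toFinset, List.mem_tails]
    tauto
  obtain ⟨x, y, l, rfl⟩ : ∃ x y l, u = x :: y :: l := by
    match u, hu with
    | x :: y :: l, _ => exact ⟨x, y, l, rfl⟩
  obtain ⟨uR, huR, hmax⟩ :=
    S.exists_max_image plexKey ⟨y :: l, (hS _).mpr ⟨List.suffix_cons _ _, by simp, by simp⟩⟩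
  obtain ⟨⟨uL, hsplit⟩, hne, hnil⟩ := (hS uR).mp huR
  refine ⟨uL, uR, hsplit.symm, ?_, hnil, fun w hw hwu hwn => ?_⟩
  · rintro rfl
    exact hne hsplit
  · rcases (hmax w ((hS w).mpr ⟨hw, hwu, hwn⟩)).lt_or_eq with h | h
    exacts [Or.inr (plexKey_lt_plexKey_iff.mp h), Or.inl (plexKey_injective h)]

theorem IsLyndon.prec_of_isShirshov {uL uR : List α} (hu : IsLyndon u)
    (h : IsShirshov u uL uR) : Prec uR u := by
  obtain ⟨rfl, hL, hR, -⟩ := h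
  exact (hu.2 uL uR rfl hL hR).prec_of_length_le (by simp)

def lowerPerms (u : List α) : Set (List α) := {w | (w : Multiset α) = u ∧ Prec w u}

theorem lowerPerms_finite (u : List α) : (lowerPerms u).Finite :=
  u.permutations.finite_toSet.subset fun _ hw =>
    List.mem_permutations.mpr (Multiset.coe_eq_coe.mp hw.1)

theorem lowerPerms_ssubset (h : w ∈ lowerPerms u) : lowerPerms w ⊂ lowerPerms u :=
  Set.ssubset_iff_subset_ne.mpr
    ⟨fun _ hv => ⟨hv.1.trans h.1, hv.2.trans h.2⟩, fun heq => (heq ▸ h).2 |> prec_irrefl w⟩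

theorem wellFounded_mem_lowerPerms : WellFounded fun w u : List α => w ∈ lowerPerms u :=
  Subrelation.wf (fun h => Set.ncard_lt_ncard (lowerPerms_ssubset h) (lowerPerms_finite _))
    (measure fun u => (lowerPerms u).ncard).wf

end Words

section FreeAlgebra

variable {k α : Type*} [CommRing k] {u v : List α} {a b : MonoidAlgebra k (FreeMonoid α)}

variable (k α) in
noncomputable def wordBasis : Module.Basis (List α) k (MonoidAlgebra k (FreeMonoid α)) :=
  (MonoidAlgebra.basis (FreeMonoid α) k).reindex FreeMonoid.toList

theorem wordBasis_apply (u : List α) :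
    wordBasis k α u = MonoidAlgebra.single (FreeMonoid.ofList u) 1 := by
  simp [wordBasis]

theorem wordBasis_append (u v : List α) :
    wordBasis k α (u ++ v) = wordBasis k α u * wordBasis k α v := by
  simp [wordBasis_apply, MonoidAlgebra.single_mul_single, FreeMonoid.ofList_append]

theorem mul_mem_span_wordBasis_image {S T U : Set (List α)}
    (hST : ∀ s ∈ S, ∀ t ∈ T, s ++ t ∈ U) (ha : a ∈ span k (wordBasis k α '' S))
    (hb : b ∈ span k (wordBasis k α '' T)) : a * b ∈ span k (wordBasis k α '' U) := by
  have hab := mul_mem_mul ha hb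
  rw [span_mul_span] at hab
  refine span_le.mpr ?_ hab
  rintro _ ⟨_, ⟨s, hs, rfl⟩, _, ⟨t, ht, rfl⟩, rfl⟩
  exact subset_span ⟨s ++ t, hST s hs t ht, wordBasis_append s t⟩

variable [LinearOrder α]

theorem mem_span_insert_lowerPerms
    (ha : a - wordBasis k α u ∈ span k (wordBasis k α '' lowerPerms u)) :
    a ∈ span k (wordBasis k α '' insert u (lowerPerms u)) := by
  rw [← sub_add_cancel a (wordBasis k α u)]
  exact add_mem (span_mono (Set.image_mono (Set.subset_insert _ _)) ha)
    (subset_span ⟨u, Set.mem_insert _ _, rfl⟩)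

theorem mul_sub_wordBasis_append_mem
    (ha : a - wordBasis k α u ∈ span k (wordBasis k α '' lowerPerms u))
    (hb : b - wordBasis k α v ∈ span k (wordBasis k α '' lowerPerms v)) :
    a * b - wordBasis k α (u ++ v) ∈ span k (wordBasis k α '' lowerPerms (u ++ v)) := by
  have hsplit : a * b - wordBasis k α (u ++ v) =
      (a - wordBasis k α u) * b + wordBasis k α u * (b - wordBasis k α v) := by
    rw [wordBasis_append]; noncomm_ring
  rw [hsplit]
  refine add_mem (mul_mem_span_wordBasis_image ?_ ha (mem_span_insert_lowerPerms hb))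
    (mul_mem_span_wordBasis_image ?_ (subset_span ⟨u, rfl, rfl⟩) hb)
  · rintro s ⟨hsu, hs⟩ t ht
    obtain rfl | ⟨htv, -⟩ := ht
    exacts [⟨by simp [← Multiset.coe_add, hsu], hs.append _ _⟩,
      ⟨by simp [← Multiset.coe_add, hsu, htv], hs.append _ _⟩]
  · rintro _ rfl t ⟨htv, ht⟩
    exact ⟨by simp [← Multiset.coe_add, htv], ht.append_left u⟩

theorem mul_mem_span_lowerPerms_of_prec
    (ha : a - wordBasis k α u ∈ span k (wordBasis k α '' lowerPerms u))
    (hb : b - wordBasis k α v ∈ span k (wordBasis k α '' lowerPerms v))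
    (hv : Prec v (u ++ v)) :
    b * a ∈ span k (wordBasis k α '' lowerPerms (u ++ v)) := by
  refine mul_mem_span_wordBasis_image ?_ (mem_span_insert_lowerPerms hb)
    (mem_span_insert_lowerPerms ha)
  rintro s hs t ht
  have hsv : (s : Multiset α) = v ∧ (s = v ∨ Prec s v) := by
    obtain rfl | ⟨h, h'⟩ := hs <;> simp_all
  have htu : (t : Multiset α) = u := by obtain rfl | ⟨h, -⟩ := ht <;> simp_all
  refine ⟨by simp [← Multiset.coe_add, hsv.1, htu, add_comm], ?_⟩
  have hs' : Prec s (u ++ v) := hsv.2.elim (· ▸ hv) (·.trans hv)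
  simpa using hs'.append t []

end FreeAlgebra

section Bracketing

variable {k α : Type*} [CommRing k] [LinearOrder α]

theorem bracketing_sub_wordBasis_mem (c : List α → List α → k)
    (br : List α → MonoidAlgebra k (FreeMonoid α))
    (hempty : br [] = 1)
    (hletter : ∀ x : α, br [x] = MonoidAlgebra.single (FreeMonoid.ofList [x]) 1)
    (hlyndon : ∀ u uL uR : List α, IsLyndon u → 2 ≤ u.length → IsShirshov u uL uR →
      br u = br uL * br uR - c uL uR • (br uR * br uL))
    (hnotlyndon : ∀ u uL uR : List α, ¬ IsLyndon u → 2 ≤ u.length →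
      IsShirshov u uL uR → br u = br uL * br uR) (u : List α) :
    br u - wordBasis k α u ∈ span k (wordBasis k α '' lowerPerms u) := by
  induction u using (measure List.length).wf.induction with
  | _ u ih =>
  rcases lt_or_ge u.length 2 with hshort | hlong
  · match u, hshort with
    | [], _ => simp [hempty, wordBasis_apply, MonoidAlgebra.one_def]
    | [x], _ => simp [hletter, wordBasis_apply]
  obtain ⟨uL, uR, hsh⟩ := exists_isShirshov hlong
  have hL := ih uL (show uL.length < u.length by grind [List.length_pos_iff, IsShirshov])
  have hR := ih uR (show uR.length < u.length by grind [List.length_pos_iff, IsShirshov])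
  have hprod := mul_sub_wordBasis_append_mem hL hR
  rw [← hsh.1] at hprod
  by_cases hlyn : IsLyndon u
  · have hswap := mul_mem_span_lowerPerms_of_prec hL hR (hsh.1 ▸ hlyn.prec_of_isShirshov hsh)
    rw [← hsh.1] at hswap
    rw [hlyndon u uL uR hlyn hlong hsh, sub_right_comm]
    exact sub_mem hprod (smul_mem _ _ hswap)
  · rwa [hnotlyndon u uL uR hlyn hlong hsh]

end Bracketing

theorem bracketing_triangular_and_basis_general {k : Type*} [Field k]
    (ρ : X → X → k)
    (br : List X → MonoidAlgebra k (FreeMonoid X))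
    (hempty : br [] = 1)
    (hletter : ∀ x : X, br [x] = MonoidAlgebra.single (FreeMonoid.ofList [x]) 1)
    (hlyndon : ∀ u uL uR : List X, IsLyndon u → 2 ≤ u.length → IsShirshov u uL uR →
      br u = br uL * br uR - rhoW ρ uL uR • (br uR * br uL))
    (hnotlyndon : ∀ u uL uR : List X, ¬ IsLyndon u → 2 ≤ u.length →
      IsShirshov u uL uR → br u = br uL * br uR) :
    (∀ u : List X, br u - MonoidAlgebra.single (FreeMonoid.ofList u) 1 ∈
      Submodule.span k {p : MonoidAlgebra k (FreeMonoid X) | ∃ w : List X,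
        (↑w : Multiset X) = ↑u ∧ Prec w u ∧
        p = MonoidAlgebra.single (FreeMonoid.ofList w) 1}) ∧
    LinearIndependent k (fun u : List X => br u) ∧
    Submodule.span k (Set.range br) = ⊤ := by
  have htri := bracketing_sub_wordBasis_mem (rhoW ρ) br hempty hletter hlyndon hnotlyndon
  refine ⟨fun u => ?_,
    linearIndependent_of_unitriangular (wordBasis k X) plexKey
      (fun _ _ h => plexKey_lt_plexKey_iff.mpr (Or.inr h.2)) htri,
    span_eq_top_of_unitriangular (wordBasis k X) wellFounded_mem_lowerPerms htri⟩
  have hlow : {p | ∃ w : List X, (↑w : Multiset X) = ↑u ∧ Prec w u ∧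
      p = MonoidAlgebra.single (FreeMonoid.ofList w) 1} = wordBasis k X '' lowerPerms u := by
    ext p
    simp [lowerPerms, wordBasis_apply, eq_comm, and_assoc]
  simpa only [hlow, wordBasis_apply] using htri u

/-- Let `br = [-]_ρ` be the `ρ`-bracketing on `k⟨X⟩`, i.e. the map
satisfying `[1]_ρ = 1`, `[x]_ρ = x` for letters, `[u]_ρ = [[u_L]_ρ, [u_R]_ρ]_ρ` for
Lyndon `u` of length ≥ 2 and `[u]_ρ = [u_L]_ρ [u_R]_ρ` for non-Lyndon `u` of length
≥ 2 (Shirshov factorization `(u_L, u_R)`).  Then `[u]_ρ ∈ u + span{w : w` a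
rearrangement of `u` with `w ≺ u}`, and `{[u]_ρ}` is a basis of `k⟨X⟩`. -/
theorem bracketing_triangular_and_basis {k : Type*} [Field k]
    (ρ : X → X → k) (hρ : ∀ x y : X, ρ x y ≠ 0)
    (br : List X → MonoidAlgebra k (FreeMonoid X))
    (hempty : br [] = 1)
    (hletter : ∀ x : X, br [x] = MonoidAlgebra.single (FreeMonoid.ofList [x]) 1)
    (hlyndon : ∀ u uL uR : List X, IsLyndon u → 2 ≤ u.length → IsShirshov u uL uR →
      br u = br uL * br uR - rhoW ρ uL uR • (br uR * br uL))
    (hnotlyndon : ∀ u uL uR : List X, ¬ IsLyndon u → 2 ≤ u.length →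
      IsShirshov u uL uR → br u = br uL * br uR) :
    (∀ u : List X, br u - MonoidAlgebra.single (FreeMonoid.ofList u) 1 ∈
      Submodule.span k {p : MonoidAlgebra k (FreeMonoid X) | ∃ w : List X,
        (↑w : Multiset X) = ↑u ∧ Prec w u ∧
        p = MonoidAlgebra.single (FreeMonoid.ofList w) 1}) ∧
    LinearIndependent k (fun u : List X => br u) ∧
    Submodule.span k (Set.range br) = ⊤ :=
  bracketing_triangular_and_basis_general ρ br hempty hletter hlyndon hnotlyndon
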